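/- Let λ > 0 and let f = h + conj∘g belong to Ω_H^0(λ). Then for all z ∈ 𝔻: |z| − λ|z|² ≤ |h(z) + conj(g(z))| ≤ |z| + λ|z|², and moreover 1 − 2λ|z| ≤ |h'(z)| − |g'(z)| and |h'(z)| + |g'(z)| ≤ 1 + 2λ|z|. -/

import Mathlib

open Complex Metric Set Filter Topology

noncomputable section

/-- The open unit disk in the complex plane. -/
def unitDisk : Set ℂ := {z : ℂ | ‖z‖ < 1}

/-- The class `Ω_H^0(λ)` of harmonic mappings `f = h + conj ∘ g`. -/
def OmegaH0 (lam : ℝ) (h g : ℂ → ℂ) : Prop :=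
  AnalyticOnNhd ℂ h unitDisk ∧ AnalyticOnNhd ℂ g unitDisk ∧
    h 0 = 0 ∧ deriv h 0 = 1 ∧ g 0 = 0 ∧ deriv g 0 = 0 ∧
    ∀ z ∈ unitDisk,
      ‖h z - z * deriv h z‖ < lam - ‖g z - z * deriv g z‖

lemma unitDisk_eq : unitDisk = Metric.ball (0:ℂ) 1 := by
  ext z; simp [unitDisk, Metric.mem_ball, Complex.dist_eq]

lemma isOpen_unitDisk : IsOpen unitDisk := by
  rw [unitDisk_eq]; exact isOpen_ball

lemma zero_mem_unitDisk : (0:ℂ) ∈ unitDisk := by simp [unitDisk]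

lemma align (a b : ℂ) : ∃ c : ℂ, ‖c‖ = 1 ∧
    ‖(a + c * b)‖ = ‖a‖ + ‖b‖ := by
  by_cases ha : a = 0
  · exact ⟨1, by simp, by simp [ha]⟩
  by_cases hb : b = 0
  · exact ⟨1, by simp, by simp [hb]⟩
  have ha' : ‖a‖ ≠ 0 := norm_ne_zero_iff.mpr ha
  have hb' : ‖b‖ ≠ 0 := norm_ne_zero_iff.mpr hb
  refine ⟨a / (‖a‖ : ℂ) * ((starRingEnd ℂ) b / (‖b‖ : ℂ)), ?_, ?_⟩
  · simp only [norm_mul, norm_div, Complex.norm_conj, Complex.norm_real, Real.norm_eq_abs, abs_norm]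
    rw [div_self ha', div_self hb', one_mul]
  · have key : a / (‖a‖ : ℂ) * ((starRingEnd ℂ) b / (‖b‖ : ℂ)) * b
        = a * ((‖b‖ / ‖a‖ : ℝ) : ℂ) := by
      have hb2 : b * (starRingEnd ℂ) b = ((‖b‖ : ℝ) : ℂ) ^ 2 := by
        rw [Complex.mul_conj, Complex.normSq_eq_norm_sq]; norm_cast
      push_cast
      field_simp
      have hA : ((‖a‖ : ℝ) : ℂ) ≠ 0 := Complex.ofReal_ne_zero.mpr ha'
      have hB : ((‖b‖ : ℝ) : ℂ) ≠ 0 := Complex.ofReal_ne_zero.mpr hb'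
      field_simp
      linear_combination hb2
    rw [key]
    have : a + a * ((‖b‖ / ‖a‖ : ℝ) : ℂ)
        = a * (((1 + ‖b‖ / ‖a‖ : ℝ)) : ℂ) := by push_cast; ring
    rw [this, norm_mul, Complex.norm_real, Real.norm_eq_abs,
      _root_.abs_of_nonneg (by positivity : (0:ℝ) ≤ 1 + ‖b‖ / ‖a‖)]
    field_simp

lemma schwarz2 {F : ℂ → ℂ} {lam : ℝ} (hF : DifferentiableOn ℂ F unitDisk)
    (h0 : F 0 = 0) (h1 : deriv F 0 = 0)
    (hb : ∀ z ∈ unitDisk, ‖(F z)‖ ≤ lam) :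
    ∀ z ∈ unitDisk, ‖(F z)‖ ≤ lam * ‖z‖ ^ 2 := by
  intro z hz
  rcases eq_or_ne z 0 with rfl | hz0
  · simp [h0]
  have hmem : unitDisk ∈ 𝓝 (0:ℂ) := isOpen_unitDisk.mem_nhds zero_mem_unitDisk
  set G : ℂ → ℂ := dslope (dslope F 0) 0 with hGdef
  have hG : DifferentiableOn ℂ G unitDisk := by
    rw [hGdef, Complex.differentiableOn_dslope hmem, Complex.differentiableOn_dslope hmem]
    exact hF
  have hGeq : ∀ w : ℂ, w ≠ 0 → G w = F w / w ^ 2 := by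
    intro w hw
    have e1 : dslope F 0 w = F w / w := by
      rw [dslope_of_ne _ hw, slope_def_field, h0]; simp [div_eq_mul_inv]
    have e0 : dslope F 0 0 = 0 := by rw [dslope_same, h1]
    rw [hGdef, dslope_of_ne _ hw, slope_def_field, e0, e1]
    rw [sub_zero, sub_zero, div_div]
    ring
  -- bound |G z| ≤ lam / r^2 for |z| < r < 1
  have hGb : ∀ r : ℝ, ‖z‖ < r → r < 1 → ‖(G z)‖ ≤ lam / r ^ 2 := by
    intro r hr1 hr2
    have hr0 : 0 < r := lt_of_le_of_lt (norm_nonneg z) hr1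
    have hsub : closedBall (0:ℂ) r ⊆ unitDisk := by
      rw [unitDisk_eq]
      exact closedBall_subset_ball hr2
    have hdc : DiffContOnCl ℂ G (ball (0:ℂ) r) := by
      refine DifferentiableOn.diffContOnCl ?_
      rw [closure_ball (0:ℂ) (ne_of_gt hr0)]
      exact hG.mono hsub
    have hfr : ∀ w ∈ frontier (ball (0:ℂ) r), ‖G w‖ ≤ lam / r ^ 2 := by
      intro w hw
      rw [frontier_ball (0:ℂ) (ne_of_gt hr0), mem_sphere_iff_norm, sub_zero] at hw
      have hw0 : w ≠ 0 := by
        intro hww; rw [hww] at hw; simp at hw; linarith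
      have hwD : w ∈ unitDisk := by simp [unitDisk, hw, hr2]
      rw [hGeq w hw0, norm_div, norm_pow, hw]
      gcongr
      exact hb w hwD
    have hzball : z ∈ closure (ball (0:ℂ) r) := subset_closure (by
      simp [mem_ball, Complex.dist_eq, hr1])
    have := Complex.norm_le_of_forall_mem_frontier_norm_le isBounded_ball hdc hfr hzball
    exact this
  -- take r → 1⁻
  have hGb1 : ‖(G z)‖ ≤ lam := by
    have htend : Tendsto (fun r : ℝ => lam / r ^ 2) (𝓝[<] (1:ℝ)) (𝓝 lam) := by
      have : Tendsto (fun r : ℝ => lam / r ^ 2) (𝓝 (1:ℝ)) (𝓝 (lam / 1 ^ 2)) := by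
        apply Tendsto.div tendsto_const_nhds
        · exact (continuous_pow 2).continuousAt
        · norm_num
      simpa using this.mono_left nhdsWithin_le_nhds
    refine ge_of_tendsto htend ?_
    filter_upwards [Ioo_mem_nhdsLT_of_mem (by constructor <;> [exact hz; exact le_refl 1] :
      (1:ℝ) ∈ Ioc (‖z‖) 1)] with r hr
    exact hGb r hr.1 hr.2
  have habsz : ‖z‖ ≠ 0 := norm_ne_zero_iff.mpr hz0
  have : ‖(F z)‖ = ‖z‖ ^ 2 * ‖(G z)‖ := by
    rw [hGeq z hz0, norm_div, norm_pow]
    field_simp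
  rw [this]
  calc ‖z‖ ^ 2 * ‖(G z)‖ ≤ ‖z‖ ^ 2 * lam := by
        gcongr
    _ = lam * ‖z‖ ^ 2 := by ring

lemma convex_unitDisk : Convex ℝ unitDisk := by
  rw [unitDisk_eq]; exact convex_ball 0 1

lemma step2 {φ F : ℂ → ℂ} {lam : ℝ} (hlam0 : 0 ≤ lam)
    (hφ : DifferentiableOn ℂ φ unitDisk)
    (hφ0 : φ 0 = 0) (hφ'0 : deriv φ 0 = 0)
    (hFφ : ∀ z ∈ unitDisk, F z = φ z - z * deriv φ z)
    (hF : ∀ z ∈ unitDisk, ‖(F z)‖ ≤ lam * ‖z‖ ^ 2) :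
    ∀ z ∈ unitDisk, ‖(φ z)‖ ≤ lam * ‖z‖ ^ 2 ∧
      ‖(deriv φ z)‖ ≤ 2 * lam * ‖z‖ := by
  have hmem : unitDisk ∈ 𝓝 (0:ℂ) := isOpen_unitDisk.mem_nhds zero_mem_unitDisk
  set ρ : ℂ → ℂ := dslope φ 0 with hρdef
  have hρ : DifferentiableOn ℂ ρ unitDisk :=
    (Complex.differentiableOn_dslope hmem).mpr hφ
  have hρ0 : ρ 0 = 0 := by rw [hρdef, dslope_same, hφ'0]
  have hρeq : ∀ w : ℂ, w ≠ 0 → ρ w = φ w / w := by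
    intro w hw
    rw [hρdef, dslope_of_ne _ hw, slope_def_field, hφ0, sub_zero, sub_zero]
  -- derivative of ρ away from 0
  have hderiv : ∀ z ∈ unitDisk, z ≠ 0 → ‖(deriv ρ z)‖ ≤ lam := by
    intro z hz hz0
    have hφat : DifferentiableAt ℂ φ z := hφ.differentiableAt (isOpen_unitDisk.mem_nhds hz)
    have hD : HasDerivAt (fun w => φ w / w) ((deriv φ z * z - φ z * 1) / z ^ 2) z :=
      hφat.hasDerivAt.div (hasDerivAt_id z) hz0
    have hev : ρ =ᶠ[𝓝 z] fun w => φ w / w := by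
      filter_upwards [isOpen_ne.mem_nhds (hz0 : z ≠ 0)] with w hw
      exact hρeq w hw
    have : deriv ρ z = (deriv φ z * z - φ z * 1) / z ^ 2 := by
      rw [hev.deriv_eq, hD.deriv]
    rw [this]
    have hFz : deriv φ z * z - φ z * 1 = -(F z) := by rw [hFφ z hz]; ring
    rw [hFz, norm_div, norm_neg, norm_pow]
    rw [div_le_iff₀ (pow_pos (norm_pos_iff.mpr hz0) 2)]
    calc ‖(F z)‖ ≤ lam * ‖z‖ ^ 2 := hF z hz
      _ = lam * ‖z‖ ^ 2 := rfl
  -- derivative bound at 0 by continuity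
  have hρan : AnalyticOnNhd ℂ ρ unitDisk := hρ.analyticOnNhd isOpen_unitDisk
  have hcont : ContinuousAt (deriv ρ) 0 := ((hρan.deriv) 0 zero_mem_unitDisk).continuousAt
  have hbound : ∀ z ∈ unitDisk, ‖(deriv ρ z)‖ ≤ lam := by
    intro z hz
    rcases eq_or_ne z 0 with rfl | hz0
    · have T : Tendsto (fun w => ‖(deriv ρ w)‖) (𝓝[≠] (0:ℂ))
          (𝓝 (‖(deriv ρ 0)‖)) :=
        (continuous_norm.continuousAt.comp hcont).tendsto.mono_left nhdsWithin_le_nhds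
      refine le_of_tendsto T ?_
      filter_upwards [self_mem_nhdsWithin, mem_nhdsWithin_of_mem_nhds hmem] with w hw1 hw2
      exact hderiv w hw2 hw1
    · exact hderiv z hz hz0
  -- MVT
  have hMVT : ∀ z ∈ unitDisk, ‖(ρ z)‖ ≤ lam * ‖z‖ := by
    intro z hz
    have := Convex.norm_image_sub_le_of_norm_deriv_le
      (fun x hx => hρ.differentiableAt (isOpen_unitDisk.mem_nhds hx))
      (fun x hx => by exact hbound x hx)
      convex_unitDisk zero_mem_unitDisk hz
    simpa [hρ0] using this
  intro z hz
  rcases eq_or_ne z 0 with rfl | hz0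
  · simp [hφ0, hφ'0]
  have habsz : 0 < ‖z‖ := norm_pos_iff.mpr hz0
  have hφle : ‖(φ z)‖ ≤ lam * ‖z‖ ^ 2 := by
    have : ‖(φ z)‖ = ‖z‖ * ‖(ρ z)‖ := by
      rw [hρeq z hz0, norm_div]
      field_simp
    rw [this]
    calc ‖z‖ * ‖(ρ z)‖ ≤ ‖z‖ * (lam * ‖z‖) := by
          gcongr
          exact hMVT z hz
      _ = lam * ‖z‖ ^ 2 := by ring
  refine ⟨hφle, ?_⟩
  have key : ‖z‖ * ‖(deriv φ z)‖ = ‖(φ z - F z)‖ := by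
    rw [← norm_mul]
    congr 1
    rw [hFφ z hz]
    ring
  have tri : ‖(φ z - F z)‖ ≤ 2 * lam * ‖z‖ ^ 2 := by
    calc ‖(φ z - F z)‖ ≤ ‖(φ z)‖ + ‖(F z)‖ := by
          simpa using norm_sub_le (φ z) (F z)
      _ ≤ lam * ‖z‖ ^ 2 + lam * ‖z‖ ^ 2 := add_le_add hφle (hF z hz)
      _ = 2 * lam * ‖z‖ ^ 2 := by ring
  have : ‖z‖ * ‖(deriv φ z)‖ ≤ ‖z‖ * (2 * lam * ‖z‖) := by
    rw [key]
    calc ‖(φ z - F z)‖ ≤ 2 * lam * ‖z‖ ^ 2 := tri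
      _ = ‖z‖ * (2 * lam * ‖z‖) := by ring
  exact (mul_le_mul_iff_right₀ habsz).mp this

lemma mainlem {lam : ℝ} {h g : ℂ → ℂ} (hf : OmegaH0 lam h g) (c : ℂ)
    (hc : ‖c‖ = 1) :
    ∀ z ∈ unitDisk, ‖(h z - z + c * g z)‖ ≤ lam * ‖z‖ ^ 2 ∧
      ‖(deriv h z - 1 + c * deriv g z)‖ ≤ 2 * lam * ‖z‖ := by
  obtain ⟨hha, hga, hh0, hh1, hg0, hg1, hcond⟩ := hf
  set φ : ℂ → ℂ := fun w => h w - w + c * g w with hφdef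
  set F : ℂ → ℂ := fun w => (h w - w * deriv h w) + c * (g w - w * deriv g w) with hFdef
  have hhd : AnalyticOnNhd ℂ (deriv h) unitDisk := hha.deriv
  have hgd : AnalyticOnNhd ℂ (deriv g) unitDisk := hga.deriv
  have hφdiff : DifferentiableOn ℂ φ unitDisk := fun z hz =>
    (((hha z hz).differentiableAt.sub differentiableAt_id).add
      ((hga z hz).differentiableAt.const_mul c)).differentiableWithinAt
  have hφderiv : ∀ z ∈ unitDisk, deriv φ z = deriv h z - 1 + c * deriv g z := by
    intro z hz
    have h1 : HasDerivAt h (deriv h z) z := (hha z hz).differentiableAt.hasDerivAt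
    have h2 : HasDerivAt g (deriv g z) z := (hga z hz).differentiableAt.hasDerivAt
    have hD : HasDerivAt φ (deriv h z - 1 + c * deriv g z) z := by
      exact ((h1.sub (hasDerivAt_id z)).add (h2.const_mul c))
    exact hD.deriv
  have hφ0 : φ 0 = 0 := by simp [hφdef, hh0, hg0]
  have hφ'0 : deriv φ 0 = 0 := by
    rw [hφderiv 0 zero_mem_unitDisk, hh1, hg1]; ring
  have hFdiff : DifferentiableOn ℂ F unitDisk := fun z hz =>
    (((hha z hz).differentiableAt.sub
      (differentiableAt_id.mul (hhd z hz).differentiableAt)).add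
      (((hga z hz).differentiableAt.sub
        (differentiableAt_id.mul (hgd z hz).differentiableAt)).const_mul c)).differentiableWithinAt
  have hF0 : F 0 = 0 := by simp [hFdef, hh0, hg0]
  have hF'0 : deriv F 0 = 0 := by
    have h1 : HasDerivAt h (deriv h 0) 0 := (hha 0 zero_mem_unitDisk).differentiableAt.hasDerivAt
    have h2 : HasDerivAt g (deriv g 0) 0 := (hga 0 zero_mem_unitDisk).differentiableAt.hasDerivAt
    have h1' : HasDerivAt (deriv h) (deriv (deriv h) 0) 0 :=
      (hhd 0 zero_mem_unitDisk).differentiableAt.hasDerivAt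
    have h2' : HasDerivAt (deriv g) (deriv (deriv g) 0) 0 :=
      (hgd 0 zero_mem_unitDisk).differentiableAt.hasDerivAt
    have hD : HasDerivAt F
        (deriv h 0 - (1 * deriv h 0 + 0 * deriv (deriv h) 0)
          + c * (deriv g 0 - (1 * deriv g 0 + 0 * deriv (deriv g) 0))) 0 := by
      exact ((h1.sub ((hasDerivAt_id 0).mul h1')).add
        ((h2.sub ((hasDerivAt_id 0).mul h2')).const_mul c))
    rw [hD.deriv]; ring
  have hFb : ∀ z ∈ unitDisk, ‖(F z)‖ ≤ lam := by
    intro z hz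
    have hc2 := hcond z hz
    calc ‖(F z)‖
        ≤ ‖(h z - z * deriv h z)‖ + ‖(c * (g z - z * deriv g z))‖ := by
          simpa using
            norm_add_le (h z - z * deriv h z) (c * (g z - z * deriv g z))
      _ = ‖(h z - z * deriv h z)‖ + ‖(g z - z * deriv g z)‖ := by
          rw [norm_mul, hc, one_mul]
      _ ≤ lam := by linarith
  have hlam0 : 0 ≤ lam := le_trans (norm_nonneg _) (hFb 0 zero_mem_unitDisk)
  have hFs := schwarz2 hFdiff hF0 hF'0 hFb
  have hFφ : ∀ z ∈ unitDisk, F z = φ z - z * deriv φ z := by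
    intro z hz
    rw [hφderiv z hz]
    simp only [hφdef, hFdef]
    ring
  intro z hz
  obtain ⟨e1, e2⟩ := step2 hlam0 hφdiff hφ0 hφ'0 hFφ hFs z hz
  refine ⟨by simpa [hφdef] using e1, ?_⟩
  rw [hφderiv z hz] at e2
  exact e2

theorem stmt10 (lam : ℝ) (hlam : 0 < lam) (h g : ℂ → ℂ) (hf : OmegaH0 lam h g) :
    ∀ z ∈ unitDisk,
      ‖z‖ - lam * ‖z‖ ^ 2 ≤
          ‖(h z + (starRingEnd ℂ) (g z))‖ ∧
      ‖(h z + (starRingEnd ℂ) (g z))‖ ≤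
          ‖z‖ + lam * ‖z‖ ^ 2 ∧
      1 - 2 * lam * ‖z‖ ≤
          ‖(deriv h z)‖ - ‖(deriv g z)‖ ∧
      ‖(deriv h z)‖ + ‖(deriv g z)‖ ≤
          1 + 2 * lam * ‖z‖ := by
  intro z hz
  obtain ⟨c₁, hc₁, e₁⟩ := align (h z - z) (g z)
  obtain ⟨c₂, hc₂, e₂⟩ := align (deriv h z - 1) (deriv g z)
  have m₁ : ‖(h z - z)‖ + ‖(g z)‖ ≤ lam * ‖z‖ ^ 2 := by
    rw [← e₁]; exact (mainlem hf c₁ hc₁ z hz).1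
  have m₂ : ‖(deriv h z - 1)‖ + ‖(deriv g z)‖ ≤ 2 * lam * ‖z‖ := by
    rw [← e₂]; exact (mainlem hf c₂ hc₂ z hz).2
  have habsconj : ‖((starRingEnd ℂ) (g z))‖ = ‖(g z)‖ := Complex.norm_conj _
  -- value bounds
  have tri1 : ‖(h z + (starRingEnd ℂ) (g z))‖ ≤
      ‖z‖ + (‖(h z - z)‖ + ‖(g z)‖) := by
    have : h z + (starRingEnd ℂ) (g z) = z + ((h z - z) + (starRingEnd ℂ) (g z)) := by ring
    rw [this]
    calc ‖(z + ((h z - z) + (starRingEnd ℂ) (g z)))‖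
        ≤ ‖z‖ + ‖((h z - z) + (starRingEnd ℂ) (g z))‖ := by
          simpa using norm_add_le z ((h z - z) + (starRingEnd ℂ) (g z))
      _ ≤ ‖z‖ + (‖(h z - z)‖ + ‖((starRingEnd ℂ) (g z))‖) := by
          have := norm_add_le (h z - z) ((starRingEnd ℂ) (g z))
          linarith
      _ = ‖z‖ + (‖(h z - z)‖ + ‖(g z)‖) := by rw [habsconj]
  have tri2 : ‖z‖ ≤ ‖(h z + (starRingEnd ℂ) (g z))‖ +
      (‖(h z - z)‖ + ‖(g z)‖) := by
    have hzeq : z = (h z + (starRingEnd ℂ) (g z)) - ((h z - z) + (starRingEnd ℂ) (g z)) := by ring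
    calc ‖z‖
        = ‖((h z + (starRingEnd ℂ) (g z)) - ((h z - z) + (starRingEnd ℂ) (g z)))‖ := by
          rw [← hzeq]
      _ ≤ ‖(h z + (starRingEnd ℂ) (g z))‖ +
          ‖((h z - z) + (starRingEnd ℂ) (g z))‖ := by
          simpa using
            norm_sub_le (h z + (starRingEnd ℂ) (g z)) ((h z - z) + (starRingEnd ℂ) (g z))
      _ ≤ ‖(h z + (starRingEnd ℂ) (g z))‖ +
          (‖(h z - z)‖ + ‖(g z)‖) := by
          have := norm_add_le (h z - z) ((starRingEnd ℂ) (g z))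
          rw [habsconj] at this
          linarith
  -- derivative bounds
  have trid1 : ‖(deriv h z)‖ ≤ 1 + ‖(deriv h z - 1)‖ := by
    have : deriv h z = 1 + (deriv h z - 1) := by ring
    rw [this]
    simpa using norm_add_le (1:ℂ) (deriv h z - 1)
  have trid2 : 1 ≤ ‖(deriv h z)‖ + ‖(deriv h z - 1)‖ := by
    have h1 : (1:ℂ) = deriv h z - (deriv h z - 1) := by ring
    calc (1:ℝ) = ‖(1:ℂ)‖ := by simp
      _ = ‖(deriv h z - (deriv h z - 1))‖ := by rw [← h1]
      _ ≤ ‖(deriv h z)‖ + ‖(deriv h z - 1)‖ := by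
          simpa using norm_sub_le (deriv h z) (deriv h z - 1)
  refine ⟨by linarith, by linarith, by linarith, by linarith⟩
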